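/- Let μ, K, C ∈ ℝ, σ > 0, h > 0, and Y ~ N(μ, σ²). Define Ψ_h(y) = (y − K)·Csinc((y − C)/(σh)) − (σ/h)·sinc((y − C)/(σh)). Then E[Ψ_h(Y)] = (1/2)(μ − K) + ((μ − K)/π) ∫₀^{1/h} ω^{−1} e^{−ω²/2} sin(ω(μ − C)/σ) dω. -/

import Mathlib

/-!
With `z = (y - C) / σ`, the substitution `t = ω z` turns `Si (z / h)` and `(π / h) sinc (z / h)`
into `∫₀^{1/h} ω⁻¹ sin (ω z) dω` and `∫₀^{1/h} cos (ω z) dω`, so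
`Ψ_h y = (y - K) / 2 + π⁻¹ ∫₀^{1/h} k(ω, y) dω` for the kernel `k = psiKernel K C σ`, which is
bounded by a quadratic in `y`; hence Fubini lets the Gaussian expectation pass under the
`ω`-integral. For `ω ≠ 0`, `k(ω, y)` is the imaginary part of an affine function of `y` times
`exp (i ω y / σ)`. Differentiating the Gaussian moment generating function gives
`E[Y e^{zY}] = (μ + σ² z) e^{zμ + σ² z² / 2}`, and at `z = i ω / σ` the contribution of `σ² z`
cancels the cosine part of `k`, leaving `(μ - K) ω⁻¹ e^{-ω²/2} sin (ω (μ - C) / σ)`.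
-/

open MeasureTheory ProbabilityTheory

/-- sinc kernel, normalized by π -/
noncomputable def sincR (x : ℝ) : ℝ := if x = 0 then 1 / Real.pi else Real.sin x / (Real.pi * x)

/-- sine integral -/
noncomputable def SiR (x : ℝ) : ℝ := ∫ t in (0:ℝ)..x, Real.sin t / t

/-- cumulative sinc -/
noncomputable def CsincR (x : ℝ) : ℝ := 1 / 2 + SiR x / Real.pi

open Real Complex Set Function

theorem abs_inv_mul_sin_mul_le (ω z : ℝ) : |ω⁻¹ * Real.sin (ω * z)| ≤ |z| := by
  rcases eq_or_ne ω 0 with rfl | hω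
  · simp
  calc |ω⁻¹ * Real.sin (ω * z)| ≤ |ω|⁻¹ * |ω * z| := by
        rw [abs_mul, abs_inv]; exact mul_le_mul_of_nonneg_left abs_sin_le_abs (by positivity)
    _ = |z| := by rw [abs_mul, inv_mul_cancel_left₀ (abs_ne_zero.mpr hω)]

theorem intervalIntegrable_inv_mul_sin_mul (z a b : ℝ) :
    IntervalIntegrable (fun ω : ℝ => ω⁻¹ * Real.sin (ω * z)) volume a b := by
  refine (intervalIntegrable_const (c := |z|)).mono_fun (by fun_prop) (ae_of_all _ fun ω => ?_)
  simpa [Real.norm_eq_abs] using abs_inv_mul_sin_mul_le ω z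

theorem integral_inv_mul_sin_mul_eq_SiR (T z : ℝ) :
    ∫ ω in (0:ℝ)..T, ω⁻¹ * Real.sin (ω * z) = SiR (T * z) := by
  rcases eq_or_ne z 0 with rfl | hz
  · simp [SiR]
  have hsinc : ∀ ω : ℝ, ω⁻¹ * Real.sin (ω * z) = z * (Real.sin (ω * z) / (ω * z)) := by
    intro ω
    rcases eq_or_ne ω 0 with rfl | hω
    · simp
    · field_simp
  simp_rw [hsinc, intervalIntegral.integral_const_mul,
    intervalIntegral.integral_comp_mul_right (fun t => Real.sin t / t) hz, SiR, zero_mul,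
    smul_eq_mul, mul_inv_cancel_left₀ hz]

theorem integral_cos_mul_eq_sincR (T z : ℝ) :
    ∫ ω in (0:ℝ)..T, Real.cos (ω * z) = π * T * sincR (T * z) := by
  rcases eq_or_ne (T * z) 0 with hTz | hTz
  · rcases mul_eq_zero.mp hTz with rfl | rfl
    · simp
    · simp [sincR]; field_simp
  obtain ⟨hT, hz⟩ := mul_ne_zero_iff.mp hTz
  rw [intervalIntegral.integral_comp_mul_right _ hz, integral_cos, sincR, if_neg hTz]
  simp only [zero_mul, Real.sin_zero, sub_zero, smul_eq_mul]
  field_simp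

noncomputable def psiKernel (K C σ ω y : ℝ) : ℝ :=
  (y - K) * (ω⁻¹ * Real.sin (ω * ((y - C) / σ))) - σ * Real.cos (ω * ((y - C) / σ))

theorem psi_eq_integral_psiKernel (K C σ h y : ℝ) :
    (y - K) * CsincR ((y - C) / (σ * h)) - σ / h * sincR ((y - C) / (σ * h))
      = (y - K) / 2 + π⁻¹ * ∫ ω in (0:ℝ)..(1 / h), psiKernel K C σ ω y := by
  have hscale : (y - C) / (σ * h) = 1 / h * ((y - C) / σ) := by ring
  simp only [psiKernel]
  rw [intervalIntegral.integral_sub ((intervalIntegrable_inv_mul_sin_mul _ _ _).const_mul _)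
      ((by fun_prop : Continuous _).intervalIntegrable _ _), intervalIntegral.integral_const_mul,
    intervalIntegral.integral_const_mul,
    integral_inv_mul_sin_mul_eq_SiR, integral_cos_mul_eq_sincR, hscale, CsincR]
  field_simp
  ring

theorem abs_psiKernel_le (K C σ ω y : ℝ) :
    |psiKernel K C σ ω y| ≤ |y - K| * |(y - C) / σ| + |σ| := by
  calc |psiKernel K C σ ω y|
      ≤ |y - K| * |ω⁻¹ * Real.sin (ω * ((y - C) / σ))| + |σ| * |Real.cos (ω * ((y - C) / σ))| := by
        rw [psiKernel, ← abs_mul, ← abs_mul]; exact abs_sub _ _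
    _ ≤ |y - K| * |(y - C) / σ| + |σ| * 1 :=
        add_le_add (mul_le_mul_of_nonneg_left (abs_inv_mul_sin_mul_le _ _) (abs_nonneg _))
          (mul_le_mul_of_nonneg_left (abs_cos_le_one _) (abs_nonneg _))
    _ = |y - K| * |(y - C) / σ| + |σ| := by rw [mul_one]

theorem integrable_uncurry_psiKernel {P : Measure ℝ} [IsFiniteMeasure P] (hP : MemLp id 2 P)
    (K C σ a b : ℝ) :
    Integrable (uncurry (psiKernel K C σ)) ((volume.restrict (uIoc a b)).prod P) := by
  have : IsFiniteMeasure (volume.restrict (uIoc a b)) :=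
    isFiniteMeasure_restrict.mpr measure_Ioc_lt_top.ne
  have hmul : Integrable (fun y => (y - K) * ((y - C) / σ)) P := by
    simp_rw [div_eq_mul_inv]
    exact (hP.sub (memLp_const K)).integrable_mul ((hP.sub (memLp_const C)).mul_const σ⁻¹)
  have hbound : Integrable (fun y => |y - K| * |(y - C) / σ| + |σ|) P := by
    simp_rw [← abs_mul]
    exact hmul.abs.add (integrable_const |σ|)
  refine (hbound.comp_snd _).mono' ?_ (ae_of_all _ fun p => ?_)
  · exact Measurable.aestronglyMeasurable (by unfold psiKernel; fun_prop)
  · exact abs_psiKernel_le K C σ p.1 p.2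

theorem MeasureTheory.Integrable.intervalIntegral_prod_right {α E : Type*} [MeasurableSpace α]
    [NormedAddCommGroup E] [NormedSpace ℝ E] {P : Measure α} [SFinite P] {f : ℝ → α → E} {a b : ℝ}
    (hf : Integrable (uncurry f) ((volume.restrict (uIoc a b)).prod P)) :
    Integrable (fun y => ∫ x in a..b, f x y) P := by
  simp_rw [intervalIntegral.intervalIntegral_eq_integral_uIoc]
  exact hf.integral_prod_right.smul _

section GaussianComplexExp

open scoped NNReal

variable (μ : ℝ) (v : ℝ≥0)

theorem integrable_pow_mul_cexp_gaussianReal (z : ℂ) (n : ℕ) :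
    Integrable (fun x : ℝ => (x : ℂ) ^ n * cexp (z * x)) (gaussianReal μ v) :=
  integrable_pow_mul_cexp_of_re_mem_interior_integrableExpSet (X := id) (by simp) n

theorem integral_mul_cexp_gaussianReal (z : ℂ) :
    ∫ x, (x : ℂ) * cexp (z * x) ∂gaussianReal μ v = (μ + v * z) * cexp (z * μ + v * z ^ 2 / 2) := by
  have hmgf : HasDerivAt (complexMGF id (gaussianReal μ v))
      (∫ x, (x : ℂ) * cexp (z * x) ∂gaussianReal μ v) z :=
    hasDerivAt_complexMGF (by simp)
  have hformula : HasDerivAt (fun z : ℂ => cexp (z * μ + v * z ^ 2 / 2))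
      ((μ + v * z) * cexp (z * μ + v * z ^ 2 / 2)) z := by
    have hexponent : HasDerivAt (fun z : ℂ => z * μ + v * z ^ 2 / 2) (μ + v * z) z := by
      refine (((hasDerivAt_id' z).mul_const (μ : ℂ)).fun_add
        (((hasDerivAt_pow 2 z).const_mul (v : ℂ)).div_const 2)).congr_deriv ?_
      ring
    exact hexponent.cexp.congr_deriv (mul_comm _ _)
  rw [funext (complexMGF_id_gaussianReal (μ := μ) (v := v))] at hmgf
  exact hmgf.unique hformula

theorem integral_affine_mul_cexp_gaussianReal (p q z : ℂ) :
    ∫ x, (p * x + q) * cexp (z * x) ∂gaussianReal μ v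
      = (p * (μ + v * z) + q) * cexp (z * μ + v * z ^ 2 / 2) := by
  have hmgf : ∫ x, cexp (z * x) ∂gaussianReal μ v = cexp (z * μ + v * z ^ 2 / 2) :=
    complexMGF_id_gaussianReal z
  have hsplit : ∀ x : ℝ, (p * x + q) * cexp (z * x) = p * (x * cexp (z * x)) + q * cexp (z * x) :=
    fun x => by ring
  simp_rw [hsplit]
  rw [integral_add, integral_const_mul, integral_const_mul, integral_mul_cexp_gaussianReal, hmgf]
  · ring
  · simpa using (integrable_pow_mul_cexp_gaussianReal μ v z 1).const_mul p
  · simpa using (integrable_pow_mul_cexp_gaussianReal μ v z 0).const_mul q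

end GaussianComplexExp

theorem psiKernel_eq_im (K C σ ω y : ℝ) :
    psiKernel K C σ ω y = (cexp (-(ω / σ * I * C))
      * (((ω : ℂ)⁻¹ * y + (-(K * (ω : ℂ)⁻¹) - σ * I)) * cexp (ω / σ * I * y))).im := by
  have hphase : -(ω / σ * I * C) + ω / σ * I * y = ((ω * ((y - C) / σ) : ℝ) : ℂ) * I := by
    push_cast; ring
  rw [mul_left_comm, ← Complex.exp_add, hphase]
  simp only [psiKernel, ← ofReal_inv, mul_im, add_im, sub_im, mul_re, add_re, sub_re, ofReal_im,
    ofReal_re, I_im, I_re, neg_re, neg_im, exp_ofReal_mul_I_re, exp_ofReal_mul_I_im]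
  ring

theorem integral_psiKernel_gaussianReal (μ K C : ℝ) {σ ω : ℝ} (hσ : σ ≠ 0) (hω : ω ≠ 0) :
    ∫ y, psiKernel K C σ ω y ∂gaussianReal μ (σ ^ 2).toNNReal
      = (μ - K) * (ω⁻¹ * Real.exp (-ω ^ 2 / 2) * Real.sin (ω * (μ - C) / σ)) := by
  have hσ' : (σ : ℂ) ≠ 0 := ofReal_ne_zero.mpr hσ
  have hω' : (ω : ℂ) ≠ 0 := ofReal_ne_zero.mpr hω
  have hv : (((σ ^ 2).toNNReal : ℝ) : ℂ) = (σ : ℂ) ^ 2 := by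
    rw [Real.coe_toNNReal _ (sq_nonneg σ)]; push_cast; rfl
  set z : ℂ := ω / σ * I
  set q : ℂ := -(K * (ω : ℂ)⁻¹) - σ * I
  have hint : Integrable (fun y : ℝ => ((ω : ℂ)⁻¹ * y + q) * cexp (z * y))
      (gaussianReal μ (σ ^ 2).toNNReal) := by
    refine (((integrable_pow_mul_cexp_gaussianReal μ _ z 1).const_mul (ω : ℂ)⁻¹).add
      ((integrable_pow_mul_cexp_gaussianReal μ _ z 0).const_mul q)).congr (ae_of_all _ fun y => ?_)
    simp only [Pi.add_apply, pow_one, pow_zero]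
    ring
  have hcoef : (ω : ℂ)⁻¹ * (μ + (σ : ℂ) ^ 2 * z) + q = (μ - K) * (ω : ℂ)⁻¹ := by
    simp only [q, z]
    field_simp
    ring
  have hgauss : cexp (-(z * C)) * cexp (z * μ + (σ : ℂ) ^ 2 * z ^ 2 / 2)
      = Real.exp (-ω ^ 2 / 2) * cexp ((ω * (μ - C) / σ : ℝ) * I) := by
    have hz2 : z ^ 2 = -((ω : ℂ) / σ) ^ 2 := by simp only [z, mul_pow, I_sq]; ring
    rw [ofReal_exp, ← Complex.exp_add, ← Complex.exp_add, hz2]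
    congr 1
    simp only [z]
    push_cast
    field_simp
    ring
  calc ∫ y, psiKernel K C σ ω y ∂gaussianReal μ (σ ^ 2).toNNReal
      = (cexp (-(z * C))
          * ∫ y, ((ω : ℂ)⁻¹ * y + q) * cexp (z * y) ∂gaussianReal μ (σ ^ 2).toNNReal).im := by
        simp_rw [psiKernel_eq_im, ← integral_const_mul]
        exact integral_im (𝕜 := ℂ) (hint.const_mul _)
    _ = (((μ - K) * (ω⁻¹ * Real.exp (-ω ^ 2 / 2)) : ℝ) * cexp ((ω * (μ - C) / σ : ℝ) * I)).im := by
        rw [integral_affine_mul_cexp_gaussianReal, hv, hcoef, mul_left_comm, hgauss]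
        push_cast
        congr 1
        ring
    _ = (μ - K) * (ω⁻¹ * Real.exp (-ω ^ 2 / 2) * Real.sin (ω * (μ - C) / σ)) := by
        rw [im_ofReal_mul, exp_ofReal_mul_I_im]
        ring

theorem assure_mean_representation_general (μ K C σ h : ℝ) (hσ : 0 < σ) :
    (∫ y, ((y - K) * CsincR ((y - C) / (σ * h)) - (σ / h) * sincR ((y - C) / (σ * h)))
        ∂(gaussianReal μ ((σ ^ 2).toNNReal)))
      = (1 / 2) * (μ - K) + ((μ - K) / Real.pi) *
          ∫ ω in (0:ℝ)..(1 / h),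
            (if ω = 0 then (μ - C) / σ
              else ω⁻¹ * Real.exp (-ω ^ 2 / 2) * Real.sin (ω * (μ - C) / σ)) := by
  set N := gaussianReal μ (σ ^ 2).toNNReal
  have hprod := integrable_uncurry_psiKernel (memLp_id_gaussianReal (μ := μ) 2 : MemLp id 2 N)
    K C σ 0 (1 / h)
  have hid : Integrable (fun y : ℝ => y) N := (memLp_id_gaussianReal 1).integrable le_rfl
  have hlinear : ∫ y, (y - K) / 2 ∂N = (μ - K) / 2 := by
    rw [integral_div, integral_sub hid (integrable_const K), integral_id_gaussianReal,
      integral_const, probReal_univ, one_smul]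
  have hlinear_int : Integrable (fun y : ℝ => (y - K) / 2) N :=
    (hid.sub (integrable_const K)).div_const 2
  have hfreq : ∫ ω in (0:ℝ)..(1 / h), ∫ y, psiKernel K C σ ω y ∂N
      = (μ - K) * ∫ ω in (0:ℝ)..(1 / h), (if ω = 0 then (μ - C) / σ
          else ω⁻¹ * Real.exp (-ω ^ 2 / 2) * Real.sin (ω * (μ - C) / σ)) := by
    rw [← intervalIntegral.integral_const_mul]
    refine intervalIntegral.integral_congr_ae ((Measure.ae_ne volume 0).mono fun ω hω _ => ?_)
    rw [if_neg hω, integral_psiKernel_gaussianReal μ K C hσ.ne' hω]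
  simp_rw [psi_eq_integral_psiKernel]
  rw [integral_add hlinear_int (hprod.intervalIntegral_prod_right.const_mul _),
    integral_const_mul, hlinear, ← intervalIntegral_integral_swap hprod, hfreq]
  ring

/-- truncated frequency-domain representation of `E[Ψ_h(Y)]`. -/
theorem assure_mean_representation (μ K C σ h : ℝ) (hσ : 0 < σ) (hh : 0 < h) :
    (∫ y, ((y - K) * CsincR ((y - C) / (σ * h)) - (σ / h) * sincR ((y - C) / (σ * h)))
        ∂(gaussianReal μ ((σ ^ 2).toNNReal)))
      = (1 / 2) * (μ - K) + ((μ - K) / Real.pi) *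
          ∫ ω in (0:ℝ)..(1 / h),
            (if ω = 0 then (μ - C) / σ
              else ω⁻¹ * Real.exp (-ω ^ 2 / 2) * Real.sin (ω * (μ - C) / σ)) :=
  assure_mean_representation_general μ K C σ h hσ
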